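/- (Lyapunov inequality underlying Theorem 4.8) Suppose the state-dependent rate matrices converge at infinity: there is a conservative Q-matrix Q on S such that q_{ij}(x) → Q_{ij} as |x| → ∞ for all i, j ∈ S. Suppose ρ, h : ℝ^d → (0,∞) are twice continuously differentiable, there exist r0 > 0 and β ∈ ℝ^N with ℒ^{(i)}ρ(x) ≤ β_i h(x) for all |x| > r0 and i ∈ S, and ℒ^{(i)}h(x)/h(x) → 0 as |x| → ∞ for every i ∈ S. Suppose there exist c > 0 and ξ ∈ ℝ^N with ξ_i > 0 for all i such that (Qξ)_i = −c − β_i for every i ∈ S. Then there exists r1 > r0 such that the function V(x,i) = ρ(x) + ξ_i h(x) satisfies 𝒜V(x,i) ≤ −(c/2) h(x) < 0 for all |x| > r1 and all i ∈ S. -/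

import Mathlib

open scoped BigOperators
open Filter

/-- The diffusion generator `ℒ^{(i)}f(x) = ⟨b(x,i), ∇f(x)⟩ + (1/2) tr(a(x,i) ∇²f(x))`
in a fixed environment, expressed via Fréchet derivatives on Euclidean space. -/
noncomputable def diffGen {d : ℕ}
    (b : EuclideanSpace ℝ (Fin d) → EuclideanSpace ℝ (Fin d))
    (a : EuclideanSpace ℝ (Fin d) → Matrix (Fin d) (Fin d) ℝ)
    (f : EuclideanSpace ℝ (Fin d) → ℝ) (x : EuclideanSpace ℝ (Fin d)) : ℝ :=
  fderiv ℝ f x (b x) +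
    (1 / 2) * ∑ k, ∑ l, a x k l *
      fderiv ℝ (fun y => fderiv ℝ f y (EuclideanSpace.single l 1)) x
        (EuclideanSpace.single k 1)

/-- The full generator of the regime-switching diffusion:
`𝒜V(x,i) = ℒ^{(i)}V(·,i)(x) + Σ_{j≠i} q_{ij}(x)(V(x,j) − V(x,i))`. -/
noncomputable def hybridGen {N d : ℕ}
    (b : EuclideanSpace ℝ (Fin d) → Fin N → EuclideanSpace ℝ (Fin d))
    (a : EuclideanSpace ℝ (Fin d) → Fin N → Matrix (Fin d) (Fin d) ℝ)
    (Q : EuclideanSpace ℝ (Fin d) → Matrix (Fin N) (Fin N) ℝ)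
    (V : EuclideanSpace ℝ (Fin d) → Fin N → ℝ)
    (x : EuclideanSpace ℝ (Fin d)) (i : Fin N) : ℝ :=
  diffGen (fun y => b y i) (fun y => a y i) (fun y => V y i) x +
    ∑ j ∈ Finset.univ.erase i, Q x i j * (V x j - V x i)

/-! Write `g_i(x) = Σ_{j≠i} q_{ij}(x)(ξ_j − ξ_i)`. Since `ℒ^{(i)}` is linear,
`𝒜V(x,i) = ℒ^{(i)}ρ(x) + ξ_i ℒ^{(i)}h(x) + g_i(x) h(x) ≤ (β_i + ξ_i ℒ^{(i)}h(x)/h(x) + g_i(x)) h(x)`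
for `|x| > r0`. As `|x| → ∞` the bracket tends to `β_i + Σ_{j≠i} Q_{ij}(ξ_j − ξ_i) = β_i + (Qξ)_i = −c`
(the rows of the limit `Q` sum to zero), so it is eventually below `−c/2` for all of the finitely many `i`. -/

lemma differentiable_fderiv_apply_of_contDiff_two {E : Type*} [NormedAddCommGroup E]
    [NormedSpace ℝ E] {f : E → ℝ} (hf : ContDiff ℝ 2 f) (v : E) :
    Differentiable ℝ (fun y => fderiv ℝ f y v) :=
  ((ContinuousLinearMap.apply ℝ ℝ v).contDiff.comp
    (hf.fderiv_right (m := 1) (by norm_num))).differentiable (by norm_num)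

section Generator

variable {d : ℕ}

lemma diffGen_add_const_mul
    (b : EuclideanSpace ℝ (Fin d) → EuclideanSpace ℝ (Fin d))
    (a : EuclideanSpace ℝ (Fin d) → Matrix (Fin d) (Fin d) ℝ)
    {f g : EuclideanSpace ℝ (Fin d) → ℝ} (hf : ContDiff ℝ 2 f) (hg : ContDiff ℝ 2 g)
    (k : ℝ) (x : EuclideanSpace ℝ (Fin d)) :
    diffGen b a (fun y => f y + k * g y) x = diffGen b a f x + k * diffGen b a g x := by
  have hfd : Differentiable ℝ f := hf.differentiable (by norm_num)
  have hgd : Differentiable ℝ g := hg.differentiable (by norm_num)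
  have hD : ∀ y, fderiv ℝ (fun z => f z + k * g z) y = fderiv ℝ f y + k • fderiv ℝ g y :=
    fun y => by rw [fderiv_fun_add (hfd y) ((hgd y).const_mul k), fderiv_const_mul (hgd y) k]
  have hD2 : ∀ v w, fderiv ℝ (fun y => fderiv ℝ (fun z => f z + k * g z) y v) x w
      = fderiv ℝ (fun y => fderiv ℝ f y v) x w + k * fderiv ℝ (fun y => fderiv ℝ g y v) x w := by
    intro v w
    have hf' := differentiable_fderiv_apply_of_contDiff_two hf v x
    have hg' := differentiable_fderiv_apply_of_contDiff_two hg v x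
    simp only [hD, add_apply, smul_apply, smul_eq_mul]
    rw [fderiv_fun_add hf' (hg'.const_mul k), fderiv_const_mul hg' k]
    rfl
  simp only [diffGen, hD x, hD2, add_apply, smul_apply,
    smul_eq_mul, mul_add, Finset.sum_add_distrib, Finset.mul_sum, mul_left_comm]
  ring

lemma hybridGen_add_mul {N : ℕ}
    (b : EuclideanSpace ℝ (Fin d) → Fin N → EuclideanSpace ℝ (Fin d))
    (a : EuclideanSpace ℝ (Fin d) → Fin N → Matrix (Fin d) (Fin d) ℝ)
    (Q : EuclideanSpace ℝ (Fin d) → Matrix (Fin N) (Fin N) ℝ)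
    {ρ h : EuclideanSpace ℝ (Fin d) → ℝ} (hρ : ContDiff ℝ 2 ρ) (hh : ContDiff ℝ 2 h)
    (ξ : Fin N → ℝ) (x : EuclideanSpace ℝ (Fin d)) (i : Fin N) :
    hybridGen b a Q (fun y j => ρ y + ξ j * h y) x i
      = diffGen (fun y => b y i) (fun y => a y i) ρ x
        + ξ i * diffGen (fun y => b y i) (fun y => a y i) h x
        + (∑ j ∈ Finset.univ.erase i, Q x i j * (ξ j - ξ i)) * h x := by
  rw [hybridGen, diffGen_add_const_mul _ _ hρ hh, Finset.sum_mul]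
  congr 1
  refine Finset.sum_congr rfl fun j _ => ?_
  ring

end Generator

lemma Matrix.sum_erase_mul_sub_eq_mulVec {ι R : Type*} [Fintype ι] [DecidableEq ι]
    [CommRing R] (A : Matrix ι ι R) (hA : ∀ i, ∑ j, A i j = 0) (ξ : ι → R) (i : ι) :
    ∑ j ∈ Finset.univ.erase i, A i j * (ξ j - ξ i) = A.mulVec ξ i := by
  rw [Finset.sum_erase _ (by simp), Matrix.mulVec, dotProduct]
  simp only [mul_sub, Finset.sum_sub_distrib, ← Finset.sum_mul, hA i, zero_mul, sub_zero]

lemma exists_gt_forall_of_eventually_comap_norm_atTop {E : Type*} [Norm E] {P : E → Prop}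
    (hP : ∀ᶠ x in comap (fun x : E => ‖x‖) atTop, P x) (r0 : ℝ) :
    ∃ r1, r0 < r1 ∧ ∀ x : E, r1 < ‖x‖ → P x := by
  obtain ⟨r, hr⟩ := eventually_atTop.1 (eventually_comap.1 hP)
  exact ⟨max r r0 + 1, by linarith [le_max_right r r0],
    fun x hx => hr ‖x‖ (by linarith [le_max_left r r0]) x rfl⟩

theorem lyapunov_limit_Q_matrix_general
    (N d : ℕ)
    (b : EuclideanSpace ℝ (Fin d) → Fin N → EuclideanSpace ℝ (Fin d))
    (a : EuclideanSpace ℝ (Fin d) → Fin N → Matrix (Fin d) (Fin d) ℝ)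
    (Q : EuclideanSpace ℝ (Fin d) → Matrix (Fin N) (Fin N) ℝ)
    (Qlim : Matrix (Fin N) (Fin N) ℝ)
    (hQlimrow : ∀ i, ∑ j, Qlim i j = 0)
    (hQconv : ∀ i j, Tendsto (fun x : EuclideanSpace ℝ (Fin d) => Q x i j)
      (Filter.comap (fun x : EuclideanSpace ℝ (Fin d) => ‖x‖) Filter.atTop)
      (nhds (Qlim i j)))
    (ρ h : EuclideanSpace ℝ (Fin d) → ℝ)
    (hhpos : ∀ x, 0 < h x)
    (hρC2 : ContDiff ℝ 2 ρ) (hhC2 : ContDiff ℝ 2 h)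
    (r0 : ℝ)
    (β : Fin N → ℝ)
    (hL : ∀ x : EuclideanSpace ℝ (Fin d), r0 < ‖x‖ → ∀ i,
      diffGen (fun y => b y i) (fun y => a y i) ρ x ≤ β i * h x)
    (hLh : ∀ i, Tendsto (fun x => diffGen (fun y => b y i) (fun y => a y i) h x / h x)
      (Filter.comap (fun x : EuclideanSpace ℝ (Fin d) => ‖x‖) Filter.atTop) (nhds 0))
    (c : ℝ) (hc : 0 < c)
    (ξ : Fin N → ℝ)
    (hfred : ∀ i, Qlim.mulVec ξ i = -c - β i) :
    ∃ r1 : ℝ, r0 < r1 ∧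
      ∀ x : EuclideanSpace ℝ (Fin d), r1 < ‖x‖ → ∀ i,
        hybridGen b a Q (fun y j => ρ y + ξ j * h y) x i ≤ -(c / 2) * h x ∧
        -(c / 2) * h x < 0 := by
  have hrate : ∀ᶠ x in comap (fun x : EuclideanSpace ℝ (Fin d) => ‖x‖) atTop, ∀ i,
      β i + ξ i * (diffGen (fun y => b y i) (fun y => a y i) h x / h x)
        + ∑ j ∈ Finset.univ.erase i, Q x i j * (ξ j - ξ i) < -(c / 2) := by
    refine eventually_all.2 fun i => ?_
    have hjump := tendsto_finsetSum (Finset.univ.erase i) fun j _ =>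
      (hQconv i j).mul_const (ξ j - ξ i)
    rw [Qlim.sum_erase_mul_sub_eq_mulVec hQlimrow, hfred] at hjump
    refine ((tendsto_const_nhds.add ((hLh i).const_mul (ξ i))).add hjump).eventually_lt_const ?_
    linarith
  obtain ⟨r1, hr01, hr1⟩ := exists_gt_forall_of_eventually_comap_norm_atTop hrate r0
  refine ⟨r1, hr01, fun x hx i => ?_⟩
  have hρ := hL x (hr01.trans hx) i
  have hbound := mul_lt_mul_of_pos_right (hr1 x hx i) (hhpos x)
  rw [add_mul, add_mul, mul_assoc, div_mul_cancel₀ _ (hhpos x).ne'] at hbound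
  rw [hybridGen_add_mul b a Q hρC2 hhC2]
  exact ⟨by linarith, by nlinarith [hhpos x]⟩

/-- (Lyapunov inequality underlying Theorem 4.8): if `Q(x) → Q` as `|x| → ∞`
with `Q` a conservative Q-matrix, `ℒ^{(i)}ρ ≤ β_i h` for `|x| > r0`,
`ℒ^{(i)}h/h → 0` as `|x| → ∞`, and `(Qξ)_i = −c − β_i` with `ξ ≫ 0`, `c > 0`,
then there exists `r1 > r0` such that `V(x,i) = ρ(x) + ξ_i h(x)` satisfies
`𝒜V(x,i) ≤ −(c/2) h(x) < 0` for all `|x| > r1` and all `i`. -/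
theorem lyapunov_limit_Q_matrix
    (N d : ℕ) (hN : 1 ≤ N) (hd : 1 ≤ d)
    (b : EuclideanSpace ℝ (Fin d) → Fin N → EuclideanSpace ℝ (Fin d))
    (a : EuclideanSpace ℝ (Fin d) → Fin N → Matrix (Fin d) (Fin d) ℝ)
    (ha : ∀ x i, (a x i).PosSemidef)
    (Q : EuclideanSpace ℝ (Fin d) → Matrix (Fin N) (Fin N) ℝ)
    (hQoff : ∀ x i j, i ≠ j → 0 ≤ Q x i j)
    (hQrow : ∀ x i, ∑ j, Q x i j = 0)
    (Qlim : Matrix (Fin N) (Fin N) ℝ)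
    (hQlimoff : ∀ i j, i ≠ j → 0 ≤ Qlim i j)
    (hQlimrow : ∀ i, ∑ j, Qlim i j = 0)
    (hQconv : ∀ i j, Tendsto (fun x : EuclideanSpace ℝ (Fin d) => Q x i j)
      (Filter.comap (fun x : EuclideanSpace ℝ (Fin d) => ‖x‖) Filter.atTop)
      (nhds (Qlim i j)))
    (ρ h : EuclideanSpace ℝ (Fin d) → ℝ)
    (hρpos : ∀ x, 0 < ρ x) (hhpos : ∀ x, 0 < h x)
    (hρC2 : ContDiff ℝ 2 ρ) (hhC2 : ContDiff ℝ 2 h)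
    (r0 : ℝ) (hr0 : 0 < r0)
    (β : Fin N → ℝ)
    (hL : ∀ x : EuclideanSpace ℝ (Fin d), r0 < ‖x‖ → ∀ i,
      diffGen (fun y => b y i) (fun y => a y i) ρ x ≤ β i * h x)
    (hLh : ∀ i, Tendsto (fun x => diffGen (fun y => b y i) (fun y => a y i) h x / h x)
      (Filter.comap (fun x : EuclideanSpace ℝ (Fin d) => ‖x‖) Filter.atTop) (nhds 0))
    (c : ℝ) (hc : 0 < c)
    (ξ : Fin N → ℝ) (hξ : ∀ i, 0 < ξ i)
    (hfred : ∀ i, Qlim.mulVec ξ i = -c - β i) :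
    ∃ r1 : ℝ, r0 < r1 ∧
      ∀ x : EuclideanSpace ℝ (Fin d), r1 < ‖x‖ → ∀ i,
        hybridGen b a Q (fun y j => ρ y + ξ j * h y) x i ≤ -(c / 2) * h x ∧
        -(c / 2) * h x < 0 :=
  lyapunov_limit_Q_matrix_general N d b a Q Qlim hQlimrow hQconv ρ h hhpos hρC2 hhC2 r0 β hL hLh c
    hc ξ hfred
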